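/- For every integer p and every non-negative integer n, the generalized harmonic number satisfies H_{n+1}^{(p)} = Σ_{k=1}^{n+1} 1/k^p = (1/n!) · Σ_{j=0}^{n} [n+1, j+1] · B_j^{(p)}, where [n+1, j+1] denotes the unsigned Stirling number of the first kind and B_j^{(p)} denotes the j-th poly-Bernoulli number of index p. The identity is an equality of rational numbers. -/

import Mathlib

/-- Unsigned Stirling numbers of the first kind: `[n, k]` counts permutations
of `n` elements with `k` disjoint cycles. -/
def stirlingFirst : ℕ → ℕ → ℕ
  | 0, 0 => 1
  | 0, _ + 1 => 0
  | _ + 1, 0 => 0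
  | n + 1, k + 1 => n * stirlingFirst n (k + 1) + stirlingFirst n k

/-- Stirling numbers of the second kind: `{n, k}` counts partitions of an
`n`-element set into `k` non-empty blocks. -/
def stirlingSecond : ℕ → ℕ → ℕ
  | 0, 0 => 1
  | 0, _ + 1 => 0
  | _ + 1, 0 => 0
  | n + 1, k + 1 => (k + 1) * stirlingSecond n (k + 1) + stirlingSecond n k

/-- Generalized harmonic number `H_n^(p) = ∑_{k=1}^n k^(-p)` as a rational number. -/
def genHarmonic (n : ℕ) (p : ℤ) : ℚ :=
  ∑ k ∈ Finset.Icc 1 n, ((k : ℚ)) ^ (-p)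

/-- Poly-Bernoulli number `B_n^(p)`, via the explicit formula
`B_n^(p) = ∑_{m=0}^n (-1)^(n+m) ⬝ m! ⬝ {n, m} / (m+1)^p`. -/
def polyBernoulli (p : ℤ) (n : ℕ) : ℚ :=
  ∑ m ∈ Finset.range (n + 1),
    (-1 : ℚ) ^ (n + m) * (Nat.factorial m) * (stirlingSecond n m) / ((m + 1 : ℚ)) ^ p

/-!
Expand each `B_j^(p)` by its explicit formula and exchange the two sums: the coefficient of
`(m + 1)^(-p)` becomes `m! · ∑_j (-1)^(j+m) [n+1, j+1] {j, m}`. Through the recurrence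
`[n+2, j+1] = (n+1) [n+1, j+1] + [n+1, j]` and the recurrence of `{j, m}`, this Stirling
convolution satisfies a two-term recurrence in `n` whose solution is `n!` for every `m ≤ n`, so
after dividing by `n!` each coefficient is `1`.
-/

open Finset

theorem stirlingFirst_eq_nat_stirlingFirst : stirlingFirst = Nat.stirlingFirst := by
  funext n k
  induction n generalizing k with
  | zero => cases k <;> rfl
  | succ n ih => cases k <;> simp [stirlingFirst, Nat.stirlingFirst, ih]

theorem stirlingSecond_eq_nat_stirlingSecond : stirlingSecond = Nat.stirlingSecond := by
  funext n k
  induction n generalizing k with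
  | zero => cases k <;> rfl
  | succ n ih => cases k <;> simp [stirlingSecond, Nat.stirlingSecond, ih]

namespace Nat

theorem sum_range_stirlingFirst_succ_mul {R : Type*} [CommSemiring R] (f : ℕ → R) (n : ℕ) :
    ∑ j ∈ range (n + 2), (stirlingFirst (n + 2) (j + 1) : R) * f j =
      (n + 1) * ∑ j ∈ range (n + 1), (stirlingFirst (n + 1) (j + 1) : R) * f j +
        ∑ j ∈ range (n + 1), (stirlingFirst (n + 1) (j + 1) : R) * f (j + 1) := by
  have hsplit : ∀ j, (stirlingFirst (n + 2) (j + 1) : R) * f j =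
      (n + 1) * (stirlingFirst (n + 1) (j + 1) * f j) + stirlingFirst (n + 1) j * f j := by
    intro j
    rw [stirlingFirst_succ_succ]
    push_cast
    ring
  rw [sum_congr rfl fun j _ => hsplit j, sum_add_distrib, ← mul_sum, sum_range_succ,
    stirlingFirst_eq_zero_of_lt (by omega : n + 1 < n + 1 + 1), sum_range_succ' _ (n + 1)]
  simp

theorem factorial_mul_sum_stirlingFirst_mul_stirlingSecond {n m : ℕ} (hmn : m ≤ n) :
    (m ! : ℤ) * ∑ j ∈ range (n + 1),
      (stirlingFirst (n + 1) (j + 1) : ℤ) * ((-1) ^ (j + m) * stirlingSecond j m) = n ! := by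
  induction n generalizing m with
  | zero =>
    obtain rfl : m = 0 := by omega
    simp [stirlingFirst_self]
  | succ n ih =>
    rw [sum_range_stirlingFirst_succ_mul]
    cases m with
    | zero =>
      simp only [stirlingSecond_succ_zero, cast_zero, mul_zero, sum_const_zero, add_zero]
      have h0 := ih (Nat.zero_le n)
      simp only [add_zero] at h0
      rw [mul_left_comm, h0, factorial_succ]
      push_cast
      ring
    | succ k =>
      obtain ⟨S, hS⟩ : ∃ S : ℕ → ℤ, ∀ m, S m = ∑ j ∈ range (n + 1),
          (stirlingFirst (n + 1) (j + 1) : ℤ) * ((-1) ^ (j + m) * stirlingSecond j m) :=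
        ⟨_, fun _ ↦ rfl⟩
      have hshift : ∑ j ∈ range (n + 1), (stirlingFirst (n + 1) (j + 1) : ℤ) *
          ((-1) ^ (j + 1 + (k + 1)) * stirlingSecond (j + 1) (k + 1)) =
            -(k + 1) * S (k + 1) + S k := by
        rw [hS, hS, mul_sum, ← sum_add_distrib]
        refine sum_congr rfl fun j _ ↦ ?_
        rw [stirlingSecond_succ_succ]
        push_cast
        ring
      have hk : k ! * S k = n ! := hS k ▸ ih (by omega)
      -- for `k = n` the coefficient `n - k` vanishes, so the sum `S (n + 1)` is never evaluated
      have hk1 : ((n : ℤ) - k) * ((k + 1)! * S (k + 1)) = ((n : ℤ) - k) * n ! := by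
        rcases (by omega : k < n ∨ k = n) with hlt | rfl
        · rw [hS, ih hlt]
        · simp
      rw [← hS, hshift]
      simp only [factorial_succ] at hk1 ⊢
      push_cast at hk1 ⊢
      linear_combination hk1 + (k + 1) * hk

end Nat

theorem polyBernoulli_eq_sum_range_of_le (p : ℤ) {j N : ℕ} (hjN : j ≤ N) :
    polyBernoulli p j = ∑ m ∈ range (N + 1),
      (-1 : ℚ) ^ (j + m) * m.factorial * (Nat.stirlingSecond j m) / ((m + 1 : ℚ)) ^ p := by
  rw [polyBernoulli, stirlingSecond_eq_nat_stirlingSecond]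
  refine sum_subset (range_subset_range.2 (by omega)) fun m _ hm ↦ ?_
  rw [Nat.stirlingSecond_eq_zero_of_lt (by simpa using hm)]
  simp

theorem genHarmonic_succ_eq_sum_range (n : ℕ) (p : ℤ) :
    genHarmonic (n + 1) p = ∑ m ∈ range (n + 1), ((m : ℚ) + 1) ^ (-p) := by
  rw [genHarmonic, ← Ico_add_one_right_eq_Icc, sum_Ico_eq_sum_range, Nat.add_sub_cancel]
  push_cast
  simp only [add_comm]

theorem genHarmonic_eq_sum_stirlingFirst_polyBernoulli (p : ℤ) (n : ℕ) :
    genHarmonic (n + 1) p =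
      (1 / (Nat.factorial n : ℚ)) *
        ∑ j ∈ Finset.range (n + 1), (stirlingFirst (n + 1) (j + 1) : ℚ) * polyBernoulli p j := by
  have hterm : ∀ m ∈ range (n + 1), ∑ j ∈ range (n + 1), (Nat.stirlingFirst (n + 1) (j + 1) : ℚ) *
      ((-1) ^ (j + m) * m.factorial * Nat.stirlingSecond j m / ((m + 1 : ℚ)) ^ p) =
        n.factorial * ((m : ℚ) + 1) ^ (-p) := by
    intro m hm
    have hq : (m.factorial : ℚ) * ∑ j ∈ range (n + 1), (Nat.stirlingFirst (n + 1) (j + 1) : ℚ) *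
        ((-1) ^ (j + m) * Nat.stirlingSecond j m) = n.factorial := by
      exact_mod_cast Nat.factorial_mul_sum_stirlingFirst_mul_stirlingSecond (mem_range_succ_iff.1 hm)
    rw [zpow_neg, ← hq, mul_sum, sum_mul]
    refine sum_congr rfl fun j _ ↦ ?_
    ring
  calc genHarmonic (n + 1) p = ∑ m ∈ range (n + 1), ((m : ℚ) + 1) ^ (-p) :=
        genHarmonic_succ_eq_sum_range n p
    _ = (1 / (n.factorial : ℚ)) * ∑ m ∈ range (n + 1), ∑ j ∈ range (n + 1),
          (Nat.stirlingFirst (n + 1) (j + 1) : ℚ) *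
            ((-1) ^ (j + m) * m.factorial * Nat.stirlingSecond j m / ((m + 1 : ℚ)) ^ p) := by
        rw [sum_congr rfl hterm, ← mul_sum]
        field_simp
    _ = _ := by
        rw [sum_comm, stirlingFirst_eq_nat_stirlingFirst]
        refine congrArg _ (sum_congr rfl fun j hj ↦ ?_)
        rw [polyBernoulli_eq_sum_range_of_le p (mem_range_succ_iff.1 hj), mul_sum]
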